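/- For every integer h, every integer k ≥ 1, every integer m ≥ 0 and every real number x, q^x · E_{m,q}^{(h+1,k)}(x) = (q−1) E_{m+1,q}^{(h,k)}(x) + E_{m,q}^{(h,k)}(x). -/
import Mathlib


open Finset

/-- The q-number `[x]_q = (1 - q^x)/(1 - q)`, with `q^x = exp (x * log q)` (rpow). -/
noncomputable def qNum (q x : ℝ) : ℝ := (1 - q ^ x) / (1 - q)

/-- `[l]_{-q} = (1 - (-q)^l)/(1 + q)` for a natural number `l`. -/
noncomputable def qNumNeg (q : ℝ) (l : ℕ) : ℝ := (1 - (-q) ^ l) / (1 + q)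

/-- The higher-order q-Euler polynomial
`E_{m,q}^{(h,k)}(x) = ((1+q)^k/(1-q)^m) * Σ_{j=0}^m C(m,j) (-1)^j q^{jx} / Π_{i=0}^{k-1} (1 + q^{h+j-i})`. -/
noncomputable def qE (q : ℝ) (h : ℤ) (k m : ℕ) (x : ℝ) : ℝ :=
  ((1 + q) ^ k / (1 - q) ^ m) *
    ∑ j ∈ Finset.range (m + 1),
      (m.choose j : ℝ) * (-1) ^ j * q ^ ((j : ℝ) * x) /
        ∏ i ∈ Finset.range k, (1 + q ^ ((h : ℝ) + (j : ℝ) - (i : ℝ)))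

theorem stmt_10 (q : ℝ) (hq : 0 < q) (hq1 : q ≠ 1) (h : ℤ) (k : ℕ) (hk : 1 ≤ k)
    (m : ℕ) (x : ℝ) :
    q ^ x * qE q (h + 1) k m x = (q - 1) * qE q h k (m + 1) x + qE q h k m x := by
  have h1q : (1 : ℝ) - q ≠ 0 := sub_ne_zero.mpr fun hh => hq1 hh.symm
  set T : ℕ → ℝ := fun j => q ^ ((j : ℝ) * x) /
      ∏ i ∈ Finset.range k, (1 + q ^ ((h : ℝ) + (j : ℝ) - (i : ℝ))) with hT
  -- Left side
  have L : q ^ x * qE q (h + 1) k m x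
      = ((1 + q) ^ k / (1 - q) ^ m) *
          ∑ j ∈ Finset.range (m + 1), (m.choose j : ℝ) * (-1) ^ j * T (j + 1) := by
    rw [qE, mul_left_comm]
    congr 1
    rw [Finset.mul_sum]
    refine Finset.sum_congr rfl fun j _ => ?_
    have hP : (∏ i ∈ Finset.range k, (1 + q ^ (((h + 1 : ℤ) : ℝ) + (j : ℝ) - (i : ℝ))))
        = ∏ i ∈ Finset.range k, (1 + q ^ ((h : ℝ) + ((j + 1 : ℕ) : ℝ) - (i : ℝ))) := by
      refine Finset.prod_congr rfl fun i _ => ?_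
      congr 2
      push_cast
      ring
    have hpow : q ^ x * q ^ ((j : ℝ) * x) = q ^ (((j + 1 : ℕ) : ℝ) * x) := by
      rw [← Real.rpow_add hq]
      congr 1
      push_cast
      ring
    simp only [hT]
    rw [hP]
    rw [show q ^ x * ((m.choose j : ℝ) * (-1) ^ j * q ^ ((j : ℝ) * x) /
          ∏ i ∈ Finset.range k, (1 + q ^ ((h : ℝ) + ((j + 1 : ℕ) : ℝ) - (i : ℝ))))
        = (m.choose j : ℝ) * (-1) ^ j * ((q ^ x * q ^ ((j : ℝ) * x)) /
          ∏ i ∈ Finset.range k, (1 + q ^ ((h : ℝ) + ((j + 1 : ℕ) : ℝ) - (i : ℝ)))) from by ring,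
      hpow]
  -- Right side
  have R : (q - 1) * qE q h k (m + 1) x + qE q h k m x
      = ((1 + q) ^ k / (1 - q) ^ m) *
          ∑ j ∈ Finset.range (m + 2),
            (((m + 1).choose j : ℝ) * (-1) ^ (j + 1) + (m.choose j : ℝ) * (-1) ^ j) * T j := by
    rw [qE, qE]
    have hm0 : ∑ j ∈ Finset.range (m + 1), (m.choose j : ℝ) * (-1) ^ j * T j
        = ∑ j ∈ Finset.range (m + 2), (m.choose j : ℝ) * (-1) ^ j * T j := by
      rw [Finset.sum_range_succ (fun j => (m.choose j : ℝ) * (-1) ^ j * T j) (m + 1)]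
      simp [Nat.choose_succ_self]
    simp only [hT, mul_div_assoc] at hm0 ⊢
    rw [hm0, Finset.mul_sum, Finset.mul_sum, Finset.mul_sum, Finset.mul_sum, ← Finset.sum_add_distrib]
    refine Finset.sum_congr rfl fun j _ => ?_
    have hpm : (1 - q) ^ (m + 1) = (1 - q) ^ m * (1 - q) := pow_succ _ _
    field_simp [hpm]
    ring
  rw [L, R]
  congr 1
  have key : ∀ j : ℕ, (((m + 1).choose (j + 1) : ℝ) * (-1) ^ (j + 1 + 1)
      + (m.choose (j + 1) : ℝ) * (-1) ^ (j + 1)) = (m.choose j : ℝ) * (-1) ^ j := by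
    intro j
    rw [Nat.choose_succ_succ]
    push_cast
    ring
  rw [Finset.sum_range_succ'
      (fun j => (((m + 1).choose j : ℝ) * (-1) ^ (j + 1) + (m.choose j : ℝ) * (-1) ^ j) * T j) (m + 1)]
  simp only [key]
  simp
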